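/- arXiv:2112.06152 — 6 statements merged into one kernel-verified Lean document; each statement's English description precedes it below -/
import Mathlib

section
/- Let n ≥ 2 and let x_1 ≤ x_2 ≤ ... ≤ x_n be real numbers, not all equal. With x̄ the mean and s² = (1/(n-1))∑(x_i - x̄)² the sample variance, the sample range satisfies √2 · s ≤ x_n - x_1. -/
theorem range_lower_bound (n : ℕ) (hn : 2 ≤ n) (x : Fin n → ℝ)
    (hmono : Monotone x) (hne : ∃ i j, x i ≠ x j) :
    Real.sqrt 2 * Real.sqrt ((1 / ((n : ℝ) - 1)) * ∑ i, (x i - (∑ j, x j) / n) ^ 2)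
      ≤ x ⟨n - 1, by omega⟩ - x ⟨0, by omega⟩ := by
  set a := x ⟨0, by omega⟩ with ha
  set b := x ⟨n - 1, by omega⟩ with hb
  have hab : ∀ i : Fin n, a ≤ x i ∧ x i ≤ b := by
    intro i
    refine ⟨hmono ?_, hmono ?_⟩
    · simp [Fin.le_def]
    · have := i.isLt; simp [Fin.le_def]; omega
  have hR : 0 ≤ b - a := by
    have h := (hab ⟨0, by omega⟩).2
    simp only [← ha] at h
    linarith
  have hn2 : (2:ℝ) ≤ (n:ℝ) := by exact_mod_cast hn
  have hn0 : (0:ℝ) < (n:ℝ) := by linarith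
  have hden : (0:ℝ) < (n:ℝ) - 1 := by linarith
  set m := (∑ j, x j) / (n:ℝ) with hm
  have hS1 : ∑ j, x j = (n:ℝ) * m := by
    rw [hm]; field_simp
  set V := ∑ i, (x i - m) ^ 2 with hV
  have key : V ≤ (n:ℝ) * (b - a) ^ 2 / 4 := by
    have h1 : ∑ i, (x i) ^ 2 ≤ ∑ i, ((a + b) * x i - a * b) := by
      apply Finset.sum_le_sum
      intro i _
      nlinarith [(hab i).1, (hab i).2]
    have h2 : ∑ i, ((a + b) * x i - a * b) = (a + b) * ((n:ℝ) * m) - (n:ℝ) * (a * b) := by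
      rw [Finset.sum_sub_distrib, ← Finset.mul_sum, hS1]
      simp [Finset.sum_const]
    have h3 : V = ∑ i, (x i) ^ 2 - (n:ℝ) * m ^ 2 := by
      have : ∀ i : Fin n, (x i - m) ^ 2 = (x i) ^ 2 - 2 * m * x i + m ^ 2 := by
        intro i; ring
      rw [hV]
      simp only [this, Finset.sum_add_distrib, Finset.sum_sub_distrib, ← Finset.mul_sum,
        Finset.sum_const, Finset.card_univ, Fintype.card_fin, nsmul_eq_mul, hS1]
      ring
    nlinarith [mul_nonneg hn0.le (sq_nonneg (2 * m - a - b))]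
  have hVnn : 0 ≤ V := Finset.sum_nonneg fun i _ => sq_nonneg _
  have h2V : 2 * ((1 / ((n:ℝ) - 1)) * V) ≤ (b - a) ^ 2 := by
    rw [show 2 * ((1 / ((n:ℝ) - 1)) * V) = (2 * V) / ((n:ℝ) - 1) by ring,
      div_le_iff₀ hden]
    nlinarith [sq_nonneg (b - a)]
  calc Real.sqrt 2 * Real.sqrt ((1 / ((n:ℝ) - 1)) * V)
      = Real.sqrt (2 * ((1 / ((n:ℝ) - 1)) * V)) := (Real.sqrt_mul (by norm_num) _).symm
    _ ≤ Real.sqrt ((b - a) ^ 2) := Real.sqrt_le_sqrt h2V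
    _ = b - a := Real.sqrt_sq hR
end

section
/- Let n ≥ 3 and let x_1 ≤ ... ≤ x_n be real numbers, not all equal, with mean x̄ and sample standard deviation s = sqrt((1/(n-1))∑(x_i - x̄)²). If x_n - x_1 = √2 · s then all x_i are equal, a contradiction; hence for n ≥ 3 and not-all-equal data the strict inequality √2·s < x_n - x_1 holds. -/
theorem range_lower_bound_strict (n : ℕ) (hn : 3 ≤ n) (x : Fin n → ℝ)
    (hmono : Monotone x) (hne : ∃ i j, x i ≠ x j) :
    Real.sqrt 2 * Real.sqrt ((1 / ((n : ℝ) - 1)) * ∑ i, (x i - (∑ j, x j) / n) ^ 2)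
      < x ⟨n - 1, by omega⟩ - x ⟨0, by omega⟩ := by
  have hn0 : (0:ℕ) < n := by omega
  have hn3 : (3:ℝ) ≤ (n:ℝ) := by exact_mod_cast hn
  set a := x ⟨0, by omega⟩ with ha
  set b := x ⟨n - 1, by omega⟩ with hb
  have hlea : ∀ i, a ≤ x i := fun i => hmono (by simp [Fin.le_def])
  have hleb : ∀ i, x i ≤ b := fun i => hmono (by have := i.2; simp [Fin.le_def]; omega)
  have hab : a < b := by
    rcases lt_or_eq_of_le (hlea ⟨n-1, by omega⟩) with h | h
    · exact h
    · exfalso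
      obtain ⟨i, j, hij⟩ := hne
      have h1 : x i = a := le_antisymm (h ▸ hleb i) (hlea i)
      have h2 : x j = a := le_antisymm (h ▸ hleb j) (hlea j)
      exact hij (h1.trans h2.symm)
  set S := ∑ j, x j with hS
  set m := S / (n:ℝ) with hm
  have hnR : (0:ℝ) < (n:ℝ) := by linarith
  have hSm : S = (n:ℝ) * m := by rw [hm]; field_simp
  have hSum : ∑ i, (x i - m)^2 ≤ (n:ℝ) * ((b-a)/2)^2 := by
    have e1 : ∀ i : Fin n, (x i - m)^2
        = (x i - a)*(x i - b) + ((a+b-2*m)*x i + (m^2 - a*b)) := by intro i; ring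
    have e2 : ∑ i, (x i - m)^2
        = (∑ i, (x i - a)*(x i - b)) + ((a+b-2*m)*S + (n:ℝ)*(m^2 - a*b)) := by
      simp only [e1, Finset.sum_add_distrib, ← Finset.mul_sum, Finset.sum_const,
        Finset.card_univ, Fintype.card_fin, nsmul_eq_mul, ← hS]
    have hterm : ∑ i, (x i - a)*(x i - b) ≤ 0 :=
      Finset.sum_nonpos fun i _ =>
        mul_nonpos_of_nonneg_of_nonpos (by linarith [hlea i]) (by linarith [hleb i])
    rw [hSm] at e2
    nlinarith [mul_nonneg hnR.le (sq_nonneg (a + b - 2*m))]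
  have hpos : (0:ℝ) < (n:ℝ) - 1 := by linarith
  have hXnn : (0:ℝ) ≤ (1/((n:ℝ)-1)) * ∑ i, (x i - m)^2 :=
    mul_nonneg (one_div_nonneg.2 hpos.le) (Finset.sum_nonneg fun i _ => sq_nonneg _)
  have h2 : 2 * ((1/((n:ℝ)-1)) * ∑ i, (x i - m)^2) < (b-a)^2 := by
    rw [show 2 * ((1/((n:ℝ)-1)) * ∑ i, (x i - m)^2)
        = (2 * ∑ i, (x i - m)^2)/((n:ℝ)-1) by ring, div_lt_iff₀ hpos]
    nlinarith [mul_pos (sub_pos.2 hab) (sub_pos.2 hab)]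
  rw [← Real.sqrt_mul (by norm_num : (0:ℝ) ≤ 2), Real.sqrt_lt' (by linarith)]
  linarith
end

section
/- (Benedetti's inequality) Let n ≥ 2 and let μ_1 ≤ μ_2 ≤ ... ≤ μ_n (not all equal) and λ_1 ≤ λ_2 ≤ ... ≤ λ_n (not all equal) be real numbers. With μ̄, λ̄ the means, s²(μ) = (1/n)∑(μ_i - μ̄)², s²(λ) = (1/n)∑(λ_i - λ̄)², and Cov(μ,λ) = (1/n)∑μ_i λ_i - μ̄·λ̄, we have Cov(μ,λ)/(s(μ)s(λ)) ≥ 1/(n-1). -/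
open Finset

lemma bene_ind_sum (N k : ℕ) (h : k + 1 ≤ N) :
    ∑ i ∈ range N, (if k < i then (1:ℝ) else 0) = (N:ℝ) - ((k:ℝ)+1) := by
  rw [Finset.sum_boole]
  have : (range N).filter (fun i => k < i) = Finset.Ico (k+1) N := by
    ext i; simp only [Finset.mem_filter, Finset.mem_range, Finset.mem_Ico]; omega
  rw [this, Nat.card_Ico]
  push_cast [Nat.cast_sub h]
  ring

lemma bene_tele (X : ℕ → ℝ) (N i : ℕ) (hi : i ≤ N) :
    ∑ k ∈ range N, (if k < i then X (k+1) - X k else 0) = X i - X 0 := by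
  rw [← Finset.sum_range_sub (fun k => X k) i]
  rw [← Finset.sum_subset (Finset.range_subset_range.mpr hi)]
  · exact Finset.sum_congr rfl (fun k hk => if_pos (Finset.mem_range.mp hk))
  · intro k _ hk; exact if_neg (by simpa using hk)

lemma bene_W (m k l : ℕ) (hk : k ≤ m) (hl : l ≤ m) :
    ∑ i ∈ range (m+2),
      ((if k < i then (1:ℝ) else 0) - ((m:ℝ)+1-(k:ℝ))/((m:ℝ)+2)) *
      ((if l < i then (1:ℝ) else 0) - ((m:ℝ)+1-(l:ℝ))/((m:ℝ)+2))
    = (((min k l : ℕ):ℝ)+1) * (((m:ℝ)+1)-((max k l : ℕ):ℝ)) / ((m:ℝ)+2) := by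
  have hm2 : ((m:ℝ)+2) ≠ 0 := by positivity
  have hprod : ∀ i : ℕ, (if k < i then (1:ℝ) else 0) * (if l < i then (1:ℝ) else 0)
      = if max k l < i then (1:ℝ) else 0 := by
    intro i
    by_cases h1 : k < i <;> by_cases h2 : l < i <;> simp [h1, h2, max_lt_iff]
  have step : ∑ i ∈ range (m+2),
      ((if k < i then (1:ℝ) else 0) - ((m:ℝ)+1-(k:ℝ))/((m:ℝ)+2)) *
      ((if l < i then (1:ℝ) else 0) - ((m:ℝ)+1-(l:ℝ))/((m:ℝ)+2))
      = ∑ i ∈ range (m+2),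
        ((if max k l < i then (1:ℝ) else 0)
          - ((m:ℝ)+1-(l:ℝ))/((m:ℝ)+2) * (if k < i then (1:ℝ) else 0)
          - ((m:ℝ)+1-(k:ℝ))/((m:ℝ)+2) * (if l < i then (1:ℝ) else 0)
          + ((m:ℝ)+1-(k:ℝ))/((m:ℝ)+2) * (((m:ℝ)+1-(l:ℝ))/((m:ℝ)+2))) := by
    refine Finset.sum_congr rfl (fun i _ => ?_)
    rw [← hprod i]; ring
  rw [step]
  rw [Finset.sum_add_distrib, Finset.sum_sub_distrib, Finset.sum_sub_distrib,
    ← Finset.mul_sum, ← Finset.mul_sum, Finset.sum_const, Finset.card_range,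
    bene_ind_sum _ _ (by omega), bene_ind_sum _ _ (by omega),
    bene_ind_sum _ _ (by omega), nsmul_eq_mul]
  rcases le_total k l with h | h
  · simp only [min_eq_left h, max_eq_right h]
    push_cast
    field_simp
    ring
  · simp only [min_eq_right h, max_eq_left h]
    push_cast
    field_simp
    ring

lemma bene_decomp (m : ℕ) (X : ℕ → ℝ) (hX0 : ∑ j ∈ range (m+2), X j = 0) :
    ∀ i, i ≤ m+1 → X i = ∑ k ∈ range (m+1),
      (X (k+1) - X k) * ((if k < i then (1:ℝ) else 0) - ((m:ℝ)+1-(k:ℝ))/((m:ℝ)+2)) := by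
  set K := ∑ k ∈ range (m+1), (X (k+1) - X k) * (((m:ℝ)+1-(k:ℝ))/((m:ℝ)+2)) with hK
  have h1 : ∀ i, i ≤ m+1 → ∑ k ∈ range (m+1),
      (X (k+1) - X k) * ((if k < i then (1:ℝ) else 0) - ((m:ℝ)+1-(k:ℝ))/((m:ℝ)+2))
      = X i - X 0 - K := by
    intro i hi
    simp only [mul_sub]
    rw [Finset.sum_sub_distrib]
    have : ∑ k ∈ range (m+1), (X (k+1) - X k) * (if k < i then (1:ℝ) else 0)
        = ∑ k ∈ range (m+1), (if k < i then X (k+1) - X k else 0) := by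
      refine Finset.sum_congr rfl (fun k _ => ?_)
      rw [mul_ite, mul_one, mul_zero]
    rw [this, bene_tele X (m+1) i hi]
  have hwsum : ∀ k, k ≤ m → ∑ i ∈ range (m+2),
      ((if k < i then (1:ℝ) else 0) - ((m:ℝ)+1-(k:ℝ))/((m:ℝ)+2)) = 0 := by
    intro k hk
    rw [Finset.sum_sub_distrib, bene_ind_sum _ _ (by omega), Finset.sum_const,
      Finset.card_range, nsmul_eq_mul]
    have hm2 : ((m:ℝ)+2) ≠ 0 := by positivity
    push_cast
    field_simp
    ring
  have h2 : X 0 + K = 0 := by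
    have hA : ∑ i ∈ range (m+2), (X i - X 0 - K) = - (((m:ℝ)+2) * (X 0 + K)) := by
      rw [Finset.sum_sub_distrib, Finset.sum_sub_distrib, hX0, Finset.sum_const,
        Finset.sum_const, Finset.card_range, nsmul_eq_mul, nsmul_eq_mul]
      push_cast; ring
    have hB : ∑ i ∈ range (m+2), (X i - X 0 - K) = 0 := by
      have hrw : ∀ i ∈ range (m+2), X i - X 0 - K = ∑ k ∈ range (m+1),
          (X (k+1) - X k) * ((if k < i then (1:ℝ) else 0) - ((m:ℝ)+1-(k:ℝ))/((m:ℝ)+2)) := by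
        intro i hi
        exact (h1 i (Nat.lt_succ_iff.mp (Finset.mem_range.mp hi))).symm
      rw [Finset.sum_congr rfl hrw, Finset.sum_comm]
      refine Finset.sum_eq_zero (fun k hk => ?_)
      rw [← Finset.mul_sum, hwsum k (Nat.lt_succ_iff.mp (Finset.mem_range.mp hk)), mul_zero]
    have h3 : ((m:ℝ)+2) * (X 0 + K) = 0 := by
      have := hA.symm.trans hB
      linarith
    rcases mul_eq_zero.mp h3 with h | h
    · exact absurd h (by positivity)
    · exact h
  intro i hi
  rw [h1 i hi]
  linarith
lemma bene_expand (m : ℕ) (X Y : ℕ → ℝ)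
    (hX0 : ∑ j ∈ range (m+2), X j = 0) (hY0 : ∑ j ∈ range (m+2), Y j = 0) :
    ∑ i ∈ range (m+2), X i * Y i
      = ∑ k ∈ range (m+1), ∑ l ∈ range (m+1),
          (X (k+1) - X k) * (Y (l+1) - Y l) *
            ((((min k l : ℕ):ℝ)+1) * (((m:ℝ)+1)-((max k l : ℕ):ℝ)) / ((m:ℝ)+2)) := by
  have h1 : ∑ i ∈ range (m+2), X i * Y i
      = ∑ i ∈ range (m+2),
          (∑ k ∈ range (m+1), (X (k+1) - X k) *
              ((if k < i then (1:ℝ) else 0) - ((m:ℝ)+1-(k:ℝ))/((m:ℝ)+2))) *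
          (∑ l ∈ range (m+1), (Y (l+1) - Y l) *
              ((if l < i then (1:ℝ) else 0) - ((m:ℝ)+1-(l:ℝ))/((m:ℝ)+2))) := by
    refine Finset.sum_congr rfl (fun i hi => ?_)
    rw [← bene_decomp m X hX0 i (Nat.lt_succ_iff.mp (Finset.mem_range.mp hi)),
        ← bene_decomp m Y hY0 i (Nat.lt_succ_iff.mp (Finset.mem_range.mp hi))]
  rw [h1]
  have h2 : ∀ i ∈ range (m+2),
      (∑ k ∈ range (m+1), (X (k+1) - X k) *
          ((if k < i then (1:ℝ) else 0) - ((m:ℝ)+1-(k:ℝ))/((m:ℝ)+2))) *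
      (∑ l ∈ range (m+1), (Y (l+1) - Y l) *
          ((if l < i then (1:ℝ) else 0) - ((m:ℝ)+1-(l:ℝ))/((m:ℝ)+2)))
      = ∑ k ∈ range (m+1), ∑ l ∈ range (m+1),
          ((X (k+1) - X k) * ((if k < i then (1:ℝ) else 0) - ((m:ℝ)+1-(k:ℝ))/((m:ℝ)+2))) *
          ((Y (l+1) - Y l) * ((if l < i then (1:ℝ) else 0) - ((m:ℝ)+1-(l:ℝ))/((m:ℝ)+2))) := by
    intro i _
    exact Finset.sum_mul_sum _ _ _ _
  rw [Finset.sum_congr rfl h2, Finset.sum_comm]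
  refine Finset.sum_congr rfl (fun k hk => ?_)
  rw [Finset.sum_comm]
  refine Finset.sum_congr rfl (fun l hl => ?_)
  have hkm : k ≤ m := Nat.lt_succ_iff.mp (Finset.mem_range.mp hk)
  have hlm : l ≤ m := Nat.lt_succ_iff.mp (Finset.mem_range.mp hl)
  rw [← bene_W m k l hkm hlm, Finset.mul_sum]
  refine Finset.sum_congr rfl (fun i _ => ?_)
  ring

lemma bene_Wle' (m k l : ℕ) (hkl : k ≤ l) (hl : l ≤ m) :
    (((min k l : ℕ):ℝ)+1) * (((m:ℝ)+1)-((max k l : ℕ):ℝ)) / ((m:ℝ)+2)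
      ≤ Real.sqrt (((k:ℝ)+1)*(((m:ℝ)+1)-(k:ℝ))/((m:ℝ)+2)) *
        Real.sqrt (((l:ℝ)+1)*(((m:ℝ)+1)-(l:ℝ))/((m:ℝ)+2)) := by
  have hkl' : (k:ℝ) ≤ l := by exact_mod_cast hkl
  have hlm : (l:ℝ) ≤ m := by exact_mod_cast hl
  have hk0 : (0:ℝ) ≤ k := Nat.cast_nonneg k
  have hA : (0:ℝ) ≤ ((k:ℝ)+1)*(((m:ℝ)+1)-(k:ℝ))/((m:ℝ)+2) := by
    apply div_nonneg (mul_nonneg (by linarith) (by linarith)) (by positivity)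
  have hB : (0:ℝ) ≤ ((l:ℝ)+1)*(((m:ℝ)+1)-(l:ℝ))/((m:ℝ)+2) := by
    apply div_nonneg (mul_nonneg (by linarith) (by linarith)) (by positivity)
  simp only [min_eq_left hkl, max_eq_right hkl]
  have hW0 : (0:ℝ) ≤ ((k:ℝ)+1)*(((m:ℝ)+1)-(l:ℝ))/((m:ℝ)+2) := by
    apply div_nonneg (mul_nonneg (by linarith) (by linarith)) (by positivity)
  rw [← Real.sqrt_mul hA, ← Real.sqrt_sq hW0]
  apply Real.sqrt_le_sqrt
  have h2 : ((k:ℝ)+1)*(((m:ℝ)+1)-(l:ℝ)) ≤ ((l:ℝ)+1)*(((m:ℝ)+1)-(k:ℝ)) := by nlinarith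
  have h1 : (0:ℝ) ≤ ((k:ℝ)+1)*(((m:ℝ)+1)-(l:ℝ)) := mul_nonneg (by linarith) (by linarith)
  have key : (((k:ℝ)+1)*(((m:ℝ)+1)-(l:ℝ)))^2
      ≤ (((k:ℝ)+1)*(((m:ℝ)+1)-(k:ℝ))) * (((l:ℝ)+1)*(((m:ℝ)+1)-(l:ℝ))) := by
    calc (((k:ℝ)+1)*(((m:ℝ)+1)-(l:ℝ)))^2
        = (((k:ℝ)+1)*(((m:ℝ)+1)-(l:ℝ))) * (((k:ℝ)+1)*(((m:ℝ)+1)-(l:ℝ))) := by ring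
      _ ≤ (((k:ℝ)+1)*(((m:ℝ)+1)-(l:ℝ))) * (((l:ℝ)+1)*(((m:ℝ)+1)-(k:ℝ))) :=
          mul_le_mul_of_nonneg_left h2 h1
      _ = (((k:ℝ)+1)*(((m:ℝ)+1)-(k:ℝ))) * (((l:ℝ)+1)*(((m:ℝ)+1)-(l:ℝ))) := by ring
  have hm2 : (0:ℝ) < ((m:ℝ)+2) := by positivity
  rw [div_pow, div_mul_div_comm, show ((m:ℝ)+2)^2 = ((m:ℝ)+2)*((m:ℝ)+2) by ring]
  gcongr

lemma bene_Wle (m k l : ℕ) (hk : k ≤ m) (hl : l ≤ m) :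
    (((min k l : ℕ):ℝ)+1) * (((m:ℝ)+1)-((max k l : ℕ):ℝ)) / ((m:ℝ)+2)
      ≤ Real.sqrt (((k:ℝ)+1)*(((m:ℝ)+1)-(k:ℝ))/((m:ℝ)+2)) *
        Real.sqrt (((l:ℝ)+1)*(((m:ℝ)+1)-(l:ℝ))/((m:ℝ)+2)) := by
  rcases le_total k l with h | h
  · exact bene_Wle' m k l h hl
  · rw [min_comm, max_comm, mul_comm (Real.sqrt _)]
    exact bene_Wle' m l k h hk
lemma bene_Wge' (m k l : ℕ) (hkl : k ≤ l) (hl : l ≤ m) :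
    Real.sqrt (((k:ℝ)+1)*(((m:ℝ)+1)-(k:ℝ))/((m:ℝ)+2)) *
      Real.sqrt (((l:ℝ)+1)*(((m:ℝ)+1)-(l:ℝ))/((m:ℝ)+2))
    ≤ ((m:ℝ)+1) * ((((min k l : ℕ):ℝ)+1) * (((m:ℝ)+1)-((max k l : ℕ):ℝ)) / ((m:ℝ)+2)) := by
  have hkl' : (k:ℝ) ≤ l := by exact_mod_cast hkl
  have hlm : (l:ℝ) ≤ m := by exact_mod_cast hl
  have hk0 : (0:ℝ) ≤ k := Nat.cast_nonneg k
  have hA : (0:ℝ) ≤ ((k:ℝ)+1)*(((m:ℝ)+1)-(k:ℝ))/((m:ℝ)+2) := by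
    apply div_nonneg (mul_nonneg (by linarith) (by linarith)) (by positivity)
  simp only [min_eq_left hkl, max_eq_right hkl]
  have hT : (0:ℝ) ≤ ((m:ℝ)+1) * (((k:ℝ)+1)*(((m:ℝ)+1)-(l:ℝ))/((m:ℝ)+2)) := by
    apply mul_nonneg (by positivity)
    apply div_nonneg (mul_nonneg (by linarith) (by linarith)) (by positivity)
  rw [← Real.sqrt_mul hA, ← Real.sqrt_sq hT]
  apply Real.sqrt_le_sqrt
  have h1 : (0:ℝ) ≤ ((k:ℝ)+1)*(((m:ℝ)+1)-(l:ℝ)) := mul_nonneg (by linarith) (by linarith)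
  have h3 : (((m:ℝ)+1)-(k:ℝ))*((l:ℝ)+1) ≤ (((m:ℝ)+1)^2)*(((k:ℝ)+1)*(((m:ℝ)+1)-(l:ℝ))) := by
    nlinarith [mul_le_mul (show (((m:ℝ)+1)-(k:ℝ)) ≤ (m:ℝ)+1 by linarith)
        (show ((l:ℝ)+1) ≤ (m:ℝ)+1 by linarith) (by linarith) (by positivity),
      mul_le_mul_of_nonneg_left
        (show (1:ℝ) ≤ ((k:ℝ)+1)*(((m:ℝ)+1)-(l:ℝ)) from
          one_le_mul_of_one_le_of_one_le (by linarith) (by linarith))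
        (show (0:ℝ) ≤ ((m:ℝ)+1)^2 by positivity)]
  have key : (((k:ℝ)+1)*(((m:ℝ)+1)-(k:ℝ))) * (((l:ℝ)+1)*(((m:ℝ)+1)-(l:ℝ)))
      ≤ (((m:ℝ)+1) * (((k:ℝ)+1)*(((m:ℝ)+1)-(l:ℝ))))^2 := by
    calc (((k:ℝ)+1)*(((m:ℝ)+1)-(k:ℝ))) * (((l:ℝ)+1)*(((m:ℝ)+1)-(l:ℝ)))
        = (((k:ℝ)+1)*(((m:ℝ)+1)-(l:ℝ))) * ((((m:ℝ)+1)-(k:ℝ))*((l:ℝ)+1)) := by ring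
      _ ≤ (((k:ℝ)+1)*(((m:ℝ)+1)-(l:ℝ))) * ((((m:ℝ)+1)^2)*(((k:ℝ)+1)*(((m:ℝ)+1)-(l:ℝ)))) :=
          mul_le_mul_of_nonneg_left h3 h1
      _ = (((m:ℝ)+1) * (((k:ℝ)+1)*(((m:ℝ)+1)-(l:ℝ))))^2 := by ring
  calc ((k:ℝ)+1)*(((m:ℝ)+1)-(k:ℝ))/((m:ℝ)+2) * (((l:ℝ)+1)*(((m:ℝ)+1)-(l:ℝ))/((m:ℝ)+2))
      = (((k:ℝ)+1)*(((m:ℝ)+1)-(k:ℝ)) * (((l:ℝ)+1)*(((m:ℝ)+1)-(l:ℝ)))) / (((m:ℝ)+2)*((m:ℝ)+2)) := by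
        rw [div_mul_div_comm]
    _ ≤ ((((m:ℝ)+1) * (((k:ℝ)+1)*(((m:ℝ)+1)-(l:ℝ))))^2) / (((m:ℝ)+2)*((m:ℝ)+2)) := by gcongr
    _ = (((m:ℝ)+1) * (((k:ℝ)+1)*(((m:ℝ)+1)-(l:ℝ))/((m:ℝ)+2)))^2 := by
        rw [← mul_div_assoc, div_pow, pow_two ((m:ℝ)+2)]

lemma bene_Wge (m k l : ℕ) (hk : k ≤ m) (hl : l ≤ m) :
    Real.sqrt (((k:ℝ)+1)*(((m:ℝ)+1)-(k:ℝ))/((m:ℝ)+2)) *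
      Real.sqrt (((l:ℝ)+1)*(((m:ℝ)+1)-(l:ℝ))/((m:ℝ)+2))
    ≤ ((m:ℝ)+1) * ((((min k l : ℕ):ℝ)+1) * (((m:ℝ)+1)-((max k l : ℕ):ℝ)) / ((m:ℝ)+2)) := by
  rcases le_total k l with h | h
  · exact bene_Wge' m k l h hl
  · rw [min_comm, max_comm, mul_comm (Real.sqrt _)]
    exact bene_Wge' m l k h hk
lemma bene_key (m : ℕ) (X Y : ℕ → ℝ)
    (hX : ∀ k, k ≤ m → X k ≤ X (k+1)) (hY : ∀ k, k ≤ m → Y k ≤ Y (k+1))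
    (hX0 : ∑ j ∈ range (m+2), X j = 0) (hY0 : ∑ j ∈ range (m+2), Y j = 0) :
    Real.sqrt (∑ i ∈ range (m+2), X i ^ 2) * Real.sqrt (∑ i ∈ range (m+2), Y i ^ 2)
      ≤ ((m:ℝ)+1) * ∑ i ∈ range (m+2), X i * Y i := by
  set g : ℕ → ℝ := fun k => Real.sqrt (((k:ℝ)+1)*(((m:ℝ)+1)-(k:ℝ))/((m:ℝ)+2)) with hg
  set A := ∑ k ∈ range (m+1), (X (k+1) - X k) * g k with hA
  set B := ∑ k ∈ range (m+1), (Y (k+1) - Y k) * g k with hB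
  have hdX : ∀ k ∈ range (m+1), 0 ≤ X (k+1) - X k :=
    fun k hk => sub_nonneg.mpr (hX k (Nat.lt_succ_iff.mp (Finset.mem_range.mp hk)))
  have hdY : ∀ k ∈ range (m+1), 0 ≤ Y (k+1) - Y k :=
    fun k hk => sub_nonneg.mpr (hY k (Nat.lt_succ_iff.mp (Finset.mem_range.mp hk)))
  have hA0 : 0 ≤ A :=
    Finset.sum_nonneg (fun k hk => mul_nonneg (hdX k hk) (Real.sqrt_nonneg _))
  have hB0 : 0 ≤ B :=
    Finset.sum_nonneg (fun k hk => mul_nonneg (hdY k hk) (Real.sqrt_nonneg _))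
  -- ∑ X² ≤ A²
  have hXX : ∑ i ∈ range (m+2), X i ^ 2 ≤ A * A := by
    have e1 : ∑ i ∈ range (m+2), X i ^ 2 = ∑ i ∈ range (m+2), X i * X i := by
      refine Finset.sum_congr rfl (fun i _ => sq (X i))
    rw [e1, bene_expand m X X hX0 hX0, hA, Finset.sum_mul_sum]
    refine Finset.sum_le_sum (fun k hk => Finset.sum_le_sum (fun l hl => ?_))
    have hkm := Nat.lt_succ_iff.mp (Finset.mem_range.mp hk)
    have hlm := Nat.lt_succ_iff.mp (Finset.mem_range.mp hl)
    calc (X (k+1) - X k) * (X (l+1) - X l) *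
          ((((min k l : ℕ):ℝ)+1) * (((m:ℝ)+1)-((max k l : ℕ):ℝ)) / ((m:ℝ)+2))
        ≤ (X (k+1) - X k) * (X (l+1) - X l) * (g k * g l) := by
          apply mul_le_mul_of_nonneg_left (bene_Wle m k l hkm hlm)
            (mul_nonneg (hdX k hk) (hdX l hl))
      _ = (X (k+1) - X k) * g k * ((X (l+1) - X l) * g l) := by ring
  have hYY : ∑ i ∈ range (m+2), Y i ^ 2 ≤ B * B := by
    have e1 : ∑ i ∈ range (m+2), Y i ^ 2 = ∑ i ∈ range (m+2), Y i * Y i := by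
      refine Finset.sum_congr rfl (fun i _ => sq (Y i))
    rw [e1, bene_expand m Y Y hY0 hY0, hB, Finset.sum_mul_sum]
    refine Finset.sum_le_sum (fun k hk => Finset.sum_le_sum (fun l hl => ?_))
    have hkm := Nat.lt_succ_iff.mp (Finset.mem_range.mp hk)
    have hlm := Nat.lt_succ_iff.mp (Finset.mem_range.mp hl)
    calc (Y (k+1) - Y k) * (Y (l+1) - Y l) *
          ((((min k l : ℕ):ℝ)+1) * (((m:ℝ)+1)-((max k l : ℕ):ℝ)) / ((m:ℝ)+2))
        ≤ (Y (k+1) - Y k) * (Y (l+1) - Y l) * (g k * g l) := by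
          apply mul_le_mul_of_nonneg_left (bene_Wle m k l hkm hlm)
            (mul_nonneg (hdY k hk) (hdY l hl))
      _ = (Y (k+1) - Y k) * g k * ((Y (l+1) - Y l) * g l) := by ring
  have hAB : A * B ≤ ((m:ℝ)+1) * ∑ i ∈ range (m+2), X i * Y i := by
    rw [bene_expand m X Y hX0 hY0, hA, hB, Finset.sum_mul_sum, Finset.mul_sum]
    have e2 : ∀ k, ((m:ℝ)+1) * ∑ l ∈ range (m+1),
        (X (k+1) - X k) * (Y (l+1) - Y l) *
          ((((min k l : ℕ):ℝ)+1) * (((m:ℝ)+1)-((max k l : ℕ):ℝ)) / ((m:ℝ)+2))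
        = ∑ l ∈ range (m+1), ((m:ℝ)+1) * ((X (k+1) - X k) * (Y (l+1) - Y l) *
          ((((min k l : ℕ):ℝ)+1) * (((m:ℝ)+1)-((max k l : ℕ):ℝ)) / ((m:ℝ)+2))) :=
      fun k => Finset.mul_sum _ _ _
    rw [Finset.sum_congr rfl (fun k _ => e2 k)]
    refine Finset.sum_le_sum (fun k hk => Finset.sum_le_sum (fun l hl => ?_))
    have hkm := Nat.lt_succ_iff.mp (Finset.mem_range.mp hk)
    have hlm := Nat.lt_succ_iff.mp (Finset.mem_range.mp hl)
    calc (X (k+1) - X k) * g k * ((Y (l+1) - Y l) * g l)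
        = (X (k+1) - X k) * (Y (l+1) - Y l) * (g k * g l) := by ring
      _ ≤ (X (k+1) - X k) * (Y (l+1) - Y l) *
            (((m:ℝ)+1) * ((((min k l : ℕ):ℝ)+1) * (((m:ℝ)+1)-((max k l : ℕ):ℝ)) / ((m:ℝ)+2))) := by
          apply mul_le_mul_of_nonneg_left (bene_Wge m k l hkm hlm)
            (mul_nonneg (hdX k hk) (hdY l hl))
      _ = ((m:ℝ)+1) * ((X (k+1) - X k) * (Y (l+1) - Y l) *
            ((((min k l : ℕ):ℝ)+1) * (((m:ℝ)+1)-((max k l : ℕ):ℝ)) / ((m:ℝ)+2))) := by ring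
  calc Real.sqrt (∑ i ∈ range (m+2), X i ^ 2) * Real.sqrt (∑ i ∈ range (m+2), Y i ^ 2)
      ≤ A * B := by
        apply mul_le_mul
        · rw [← Real.sqrt_mul_self hA0]; exact Real.sqrt_le_sqrt hXX
        · rw [← Real.sqrt_mul_self hB0]; exact Real.sqrt_le_sqrt hYY
        · exact Real.sqrt_nonneg _
        · exact hA0
    _ ≤ ((m:ℝ)+1) * ∑ i ∈ range (m+2), X i * Y i := hAB
set_option maxHeartbeats 1000000 in
theorem benedetti_inequality (n : ℕ) (hn : 2 ≤ n) (μ lam : Fin n → ℝ)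
    (hμ : Monotone μ) (hlam : Monotone lam)
    (hμne : ∃ i j, μ i ≠ μ j) (hlamne : ∃ i j, lam i ≠ lam j) :
    (1 : ℝ) / ((n : ℝ) - 1)
      ≤ ((1 / (n : ℝ)) * ∑ i, μ i * lam i - ((∑ i, μ i) / n) * ((∑ i, lam i) / n)) /
          (Real.sqrt ((1 / (n : ℝ)) * ∑ i, (μ i - (∑ j, μ j) / n) ^ 2) *
            Real.sqrt ((1 / (n : ℝ)) * ∑ i, (lam i - (∑ j, lam j) / n) ^ 2)) := by
  obtain ⟨m, rfl⟩ : ∃ m, n = m + 2 := ⟨n - 2, by omega⟩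
  push_cast
  have hN : ((m:ℝ)+2) ≠ 0 := by positivity
  set c1 : ℝ := (∑ j, μ j) / ((m:ℝ)+2) with hc1
  set c2 : ℝ := (∑ j, lam j) / ((m:ℝ)+2) with hc2
  set P : ℝ := ∑ i, (μ i - c1) ^ 2 with hPdef
  set Q : ℝ := ∑ i, (lam i - c2) ^ 2 with hQdef
  set S : ℝ := ∑ i : Fin (m+2), (μ i - c1) * (lam i - c2) with hSdef
  set X : ℕ → ℝ := fun j => μ (⟨min j (m+1), by omega⟩ : Fin (m+2)) - c1 with hXdef
  set Y : ℕ → ℝ := fun j => lam (⟨min j (m+1), by omega⟩ : Fin (m+2)) - c2 with hYdef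
  have hXi : ∀ i : Fin (m+2), X i.val = μ i - c1 := by
    intro i
    have : (⟨min i.val (m+1), by omega⟩ : Fin (m+2)) = i := Fin.ext (by simp; omega)
    rw [hXdef]; simp only []; rw [this]
  have hYi : ∀ i : Fin (m+2), Y i.val = lam i - c2 := by
    intro i
    have : (⟨min i.val (m+1), by omega⟩ : Fin (m+2)) = i := Fin.ext (by simp; omega)
    rw [hYdef]; simp only []; rw [this]
  -- transfers
  have hsP : ∑ j ∈ range (m+2), X j ^ 2 = P := by
    rw [← Fin.sum_univ_eq_sum_range (fun j => X j ^ 2) (m+2)]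
    exact Finset.sum_congr rfl (fun i _ => by rw [hXi i])
  have hsQ : ∑ j ∈ range (m+2), Y j ^ 2 = Q := by
    rw [← Fin.sum_univ_eq_sum_range (fun j => Y j ^ 2) (m+2)]
    exact Finset.sum_congr rfl (fun i _ => by rw [hYi i])
  have hsS : ∑ j ∈ range (m+2), X j * Y j = S := by
    rw [← Fin.sum_univ_eq_sum_range (fun j => X j * Y j) (m+2)]
    exact Finset.sum_congr rfl (fun i _ => by rw [hXi i, hYi i])
  have hX0 : ∑ j ∈ range (m+2), X j = 0 := by
    rw [← Fin.sum_univ_eq_sum_range (fun j => X j) (m+2),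
      Finset.sum_congr rfl (fun i _ => hXi i), Finset.sum_sub_distrib,
      Finset.sum_const, Finset.card_univ, Fintype.card_fin, nsmul_eq_mul, hc1]
    push_cast
    field_simp
    ring
  have hY0 : ∑ j ∈ range (m+2), Y j = 0 := by
    rw [← Fin.sum_univ_eq_sum_range (fun j => Y j) (m+2),
      Finset.sum_congr rfl (fun i _ => hYi i), Finset.sum_sub_distrib,
      Finset.sum_const, Finset.card_univ, Fintype.card_fin, nsmul_eq_mul, hc2]
    push_cast
    field_simp
    ring
  have hXmono : ∀ k, k ≤ m → X k ≤ X (k+1) := by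
    intro k hk
    rw [hXdef]
    simp only []
    apply sub_le_sub_right
    apply hμ
    rw [Fin.mk_le_mk]
    omega
  have hYmono : ∀ k, k ≤ m → Y k ≤ Y (k+1) := by
    intro k hk
    rw [hYdef]
    simp only []
    apply sub_le_sub_right
    apply hlam
    rw [Fin.mk_le_mk]
    omega
  -- positivity of P, Q
  have hP : 0 < P := by
    obtain ⟨i, j, hij⟩ := hμne
    have hw : ∃ w : Fin (m+2), μ w - c1 ≠ 0 := by
      by_cases h : μ i - c1 = 0
      · exact ⟨j, fun hj => hij (by linarith [sub_eq_zero.mp h, sub_eq_zero.mp hj])⟩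
      · exact ⟨i, h⟩
    obtain ⟨w, hw⟩ := hw
    refine Finset.sum_pos' (fun i _ => sq_nonneg _) ⟨w, Finset.mem_univ w, ?_⟩
    exact lt_of_le_of_ne (sq_nonneg _) (Ne.symm (pow_ne_zero 2 hw))
  have hQ : 0 < Q := by
    obtain ⟨i, j, hij⟩ := hlamne
    have hw : ∃ w : Fin (m+2), lam w - c2 ≠ 0 := by
      by_cases h : lam i - c2 = 0
      · exact ⟨j, fun hj => hij (by linarith [sub_eq_zero.mp h, sub_eq_zero.mp hj])⟩
      · exact ⟨i, h⟩
    obtain ⟨w, hw⟩ := hw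
    refine Finset.sum_pos' (fun i _ => sq_nonneg _) ⟨w, Finset.mem_univ w, ?_⟩
    exact lt_of_le_of_ne (sq_nonneg _) (Ne.symm (pow_ne_zero 2 hw))
  -- the main estimate
  have hmain : Real.sqrt P * Real.sqrt Q ≤ ((m:ℝ)+1) * S := by
    rw [← hsP, ← hsQ, ← hsS]
    exact bene_key m X Y hXmono hYmono hX0 hY0
  -- numerator identity
  have hNum : (1 / ((m:ℝ)+2)) * ∑ i, μ i * lam i - c1 * c2 = S / ((m:ℝ)+2) := by
    have e : ∀ i ∈ Finset.univ (α := Fin (m+2)),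
        (μ i - c1) * (lam i - c2) = μ i * lam i - c2 * μ i - c1 * lam i + c1 * c2 :=
      fun i _ => by ring
    rw [hSdef, Finset.sum_congr rfl e, Finset.sum_add_distrib, Finset.sum_sub_distrib,
      Finset.sum_sub_distrib, ← Finset.mul_sum, ← Finset.mul_sum, Finset.sum_const,
      Finset.card_univ, Fintype.card_fin, nsmul_eq_mul, hc1, hc2]
    push_cast
    field_simp
    ring
  -- denominator identity
  have hden : Real.sqrt ((1/((m:ℝ)+2)) * P) * Real.sqrt ((1/((m:ℝ)+2)) * Q)
      = (Real.sqrt P * Real.sqrt Q) / ((m:ℝ)+2) := by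
    rw [Real.sqrt_mul (by positivity) P, Real.sqrt_mul (by positivity) Q,
      mul_mul_mul_comm, Real.mul_self_sqrt (by positivity)]
    ring
  have hDpos : 0 < Real.sqrt P * Real.sqrt Q :=
    mul_pos (Real.sqrt_pos.mpr hP) (Real.sqrt_pos.mpr hQ)
  have hden_pos : 0 < Real.sqrt ((1/((m:ℝ)+2)) * P) * Real.sqrt ((1/((m:ℝ)+2)) * Q) := by
    rw [hden]; exact div_pos hDpos (by positivity)
  rw [show ((m:ℝ) + 2 - 1) = (m:ℝ)+1 by ring]
  rw [div_le_div_iff₀ (by positivity) hden_pos]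
  rw [hNum, hden, one_mul, div_mul_eq_mul_div]
  have hmS : (0:ℝ) < ((m:ℝ)+1) * S := lt_of_lt_of_le hDpos hmain
  have hS0 : (0:ℝ) < S := by nlinarith [hmS]
  rw [div_le_div_iff_of_pos_right (by positivity : (0:ℝ) < (m:ℝ)+2)]
  linarith [hmain]
end

section
/- Let n ≥ 2 and let λ_1 ≤ λ_2 ≤ ... ≤ λ_n be real numbers with ∑λ_i = 0, and let a_1 ≤ a_2 ≤ ... ≤ a_n be real numbers not all equal. Then ∑_{i=1}^n a_i λ_i ≥ (1/(n-1)) · sqrt(∑(a_i - ā)²) · sqrt(∑ λ_i²) ≥ 0, where ā is the mean of the a_i. -/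
open Finset in
noncomputable def wv (n k : ℕ) : EuclideanSpace ℝ (Fin n) :=
  WithLp.toLp 2 (fun i : Fin n => (if k ≤ (i:ℕ) then (1:ℝ) else 0) - ((n:ℝ) - k)/n)

noncomputable def Xext (n : ℕ) (x : Fin n → ℝ) : ℕ → ℝ :=
  fun k => if h : k < n then x ⟨k, h⟩ else 0

open Finset

lemma count_le (n t : ℕ) (ht : t ≤ n) :
    ∑ i : Fin n, (if t ≤ (i:ℕ) then (1:ℝ) else 0) = (n:ℝ) - t := by
  rw [Fin.sum_univ_eq_sum_range (fun k => if t ≤ k then (1:ℝ) else 0)]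
  rw [Finset.sum_boole]
  have : filter (fun x => t ≤ x) (range n) = Ico t n := by
    ext x; simp [mem_Ico]; omega
  rw [this, Nat.card_Ico, Nat.cast_sub ht]

lemma inner_wv (n j k : ℕ) (hn : 0 < n) (hjk : j ≤ k) (hk : k ≤ n) :
    (inner ℝ (wv n j) (wv n k) : ℝ) = (j : ℝ) * ((n:ℝ) - k) / n := by
  have hj : j ≤ n := le_trans hjk hk
  have hn' : (n:ℝ) ≠ 0 := Nat.cast_ne_zero.mpr hn.ne'
  simp only [PiLp.inner_apply, RCLike.inner_apply, conj_trivial, wv, WithLp.ofLp_toLp]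
  have expand : ∀ i : Fin n,
      ((if j ≤ (i:ℕ) then (1:ℝ) else 0) - ((n:ℝ) - j)/n) *
      ((if k ≤ (i:ℕ) then (1:ℝ) else 0) - ((n:ℝ) - k)/n)
      = (if k ≤ (i:ℕ) then (1:ℝ) else 0)
        - ((n:ℝ) - j)/n * (if k ≤ (i:ℕ) then (1:ℝ) else 0)
        - ((n:ℝ) - k)/n * (if j ≤ (i:ℕ) then (1:ℝ) else 0)
        + ((n:ℝ) - j)/n * (((n:ℝ) - k)/n) := by
    intro i
    by_cases h2 : k ≤ (i:ℕ)
    · have h1 : j ≤ (i:ℕ) := le_trans hjk h2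
      simp [h1, h2]; ring
    · by_cases h1 : j ≤ (i:ℕ) <;> simp [h1, h2] <;> ring
  simp only [mul_comm _ (_ - ((n:ℝ) - j)/n), expand]
  rw [Finset.sum_add_distrib, Finset.sum_sub_distrib, Finset.sum_sub_distrib,
    ← Finset.mul_sum, ← Finset.mul_sum, count_le n j hj, count_le n k hk,
    Finset.sum_const, Finset.card_univ, Fintype.card_fin, nsmul_eq_mul]
  field_simp
  ring

lemma norm_wv (n k : ℕ) (hn : 0 < n) (hk : k ≤ n) :
    ‖wv n k‖ = Real.sqrt ((k:ℝ) * ((n:ℝ) - k) / n) := by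
  rw [norm_eq_sqrt_real_inner, inner_wv n k k hn le_rfl hk]

lemma gen_bound (n j k : ℕ) (hn : 2 ≤ n) (hj : 1 ≤ j) (hk : 1 ≤ k)
    (hj' : j ≤ n - 1) (hk' : k ≤ n - 1) :
    (inner ℝ (wv n j) (wv n k) : ℝ) ≥ (1/((n:ℝ)-1)) * ‖wv n j‖ * ‖wv n k‖ := by
  wlog hjk : j ≤ k generalizing j k
  · rw [real_inner_comm, mul_right_comm]
    exact this k j hk hj hk' hj' (le_of_not_ge hjk)
  have hn0 : 0 < n := by omega
  have hkn : k ≤ n := by omega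
  have hjn : j ≤ n := by omega
  rw [inner_wv n j k hn0 hjk hkn, norm_wv n j hn0 hjn, norm_wv n k hn0 hkn]
  have hJ : (1:ℝ) ≤ j := by exact_mod_cast hj
  have hK : (1:ℝ) ≤ k := by exact_mod_cast hk
  have hJK : (j:ℝ) ≤ k := by exact_mod_cast hjk
  have hJ' : (j:ℝ) ≤ (n:ℝ) - 1 := by
    have : (j:ℝ) ≤ ((n-1 : ℕ) : ℝ) := by exact_mod_cast hj'
    rwa [Nat.cast_sub (by omega), Nat.cast_one] at this
  have hK' : (k:ℝ) ≤ (n:ℝ) - 1 := by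
    have : (k:ℝ) ≤ ((n-1 : ℕ) : ℝ) := by exact_mod_cast hk'
    rwa [Nat.cast_sub (by omega), Nat.cast_one] at this
  have hN : (2:ℝ) ≤ n := by exact_mod_cast hn
  have hNpos : (0:ℝ) < n := by linarith
  have hn1 : (0:ℝ) < (n:ℝ) - 1 := by linarith
  have hnj : (0:ℝ) ≤ (n:ℝ) - j := by linarith
  have hnk : (0:ℝ) ≤ (n:ℝ) - k := by linarith
  have hA : (0:ℝ) ≤ (j:ℝ) * ((n:ℝ)-j)/n := by
    apply div_nonneg (mul_nonneg (by linarith) hnj) hNpos.le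
  have h2 : (0:ℝ) ≤ (j:ℝ) * ((n:ℝ)-k)/n := by
    apply div_nonneg (mul_nonneg (by linarith) hnk) hNpos.le
  rw [mul_assoc, ← Real.sqrt_mul hA]
  have key : ((j:ℝ) * ((n:ℝ)-j)/n) * ((k:ℝ) * ((n:ℝ)-k)/n)
      ≤ (((n:ℝ)-1) * ((j:ℝ) * ((n:ℝ)-k)/n))^2 := by
    have h1 : (k:ℝ) * ((n:ℝ) - j) ≤ ((n:ℝ)-1)^2 * ((j:ℝ) * ((n:ℝ)-k)) := by
      nlinarith [mul_nonneg (sub_nonneg.mpr hJ) (sub_nonneg.mpr hK'),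
        mul_nonneg (mul_nonneg (sub_nonneg.mpr hJ) (sub_nonneg.mpr hK')) hn1.le]
    calc ((j:ℝ) * ((n:ℝ)-j)/n) * ((k:ℝ) * ((n:ℝ)-k)/n)
        = ((k:ℝ) * ((n:ℝ)-j)) * ((j:ℝ) * ((n:ℝ)-k)/n) / n := by ring
      _ ≤ (((n:ℝ)-1)^2 * ((j:ℝ)*((n:ℝ)-k))) * ((j:ℝ) * ((n:ℝ)-k)/n) / n := by
          exact div_le_div_of_nonneg_right
            (mul_le_mul_of_nonneg_right h1 h2) hNpos.le
      _ = (((n:ℝ)-1) * ((j:ℝ) * ((n:ℝ)-k)/n))^2 := by ring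
  have hs := Real.sqrt_le_sqrt key
  rw [Real.sqrt_sq (mul_nonneg hn1.le h2)] at hs
  calc (1/((n:ℝ)-1)) * Real.sqrt (((j:ℝ)*((n:ℝ)-j)/n) * ((k:ℝ)*((n:ℝ)-k)/n))
      ≤ (1/((n:ℝ)-1)) * (((n:ℝ)-1) * ((j:ℝ) * ((n:ℝ)-k)/n)) := by
        apply mul_le_mul_of_nonneg_left hs (by positivity)
    _ = (j:ℝ) * ((n:ℝ)-k) / n := by field_simp

lemma scalar_decomp (n : ℕ) (hn : 2 ≤ n) (x : Fin n → ℝ)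
    (hx0 : ∑ i, x i = 0) (i : Fin n) :
    x i = ∑ k ∈ Ico 1 n, (Xext n x k - Xext n x (k-1)) * (wv n k i) := by
  set X := Xext n x with hX
  have hn0 : (0:ℕ) < n := by omega
  have hXv : ∀ m : Fin n, X m.val = x m := by
    intro m; simp [hX, Xext, m.isLt]
  have hsumX : ∑ m ∈ range n, X m = 0 := by
    rw [← Fin.sum_univ_eq_sum_range (fun k => X k) n]
    rw [← hx0]; exact Finset.sum_congr rfl fun m _ => hXv m
  have hcomm : ∀ k : ℕ, 1 + k = k + 1 := fun k => Nat.add_comm 1 k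
  -- telescope 1
  have tel1 : ∑ k ∈ Ico 1 ((i:ℕ)+1), (X k - X (k-1)) = X i.val - X 0 := by
    rw [Finset.sum_Ico_eq_sum_range]
    simp only [hcomm, Nat.add_sub_cancel]
    exact Finset.sum_range_sub X (i:ℕ)
  -- telescope 2
  have tel2 : ∑ k ∈ Ico 1 n, (X k - X (k-1)) * ((n:ℝ) - k) = - (n * X 0) := by
    rw [Finset.sum_Ico_eq_sum_range]
    simp only [hcomm, Nat.add_sub_cancel]
    have step : ∀ k, (X (k+1) - X k) * ((n:ℝ) - ((k+1:ℕ):ℝ))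
        = (X (k+1) * ((n:ℝ) - ((k+1:ℕ):ℝ)) - X k * ((n:ℝ) - (k:ℕ))) + X k := by
      intro k; push_cast; ring
    simp only [step]
    rw [Finset.sum_add_distrib, Finset.sum_range_sub (fun k => X k * ((n:ℝ) - k))]
    have hcast : ((n-1:ℕ):ℝ) = (n:ℝ) - 1 := by
      rw [Nat.cast_sub (by omega), Nat.cast_one]
    have hsplit : ∑ k ∈ range ((n-1)+1), X k = ∑ k ∈ range (n-1), X k + X (n-1) :=
      Finset.sum_range_succ X (n-1)
    have e : (n-1)+1 = n := by omega
    rw [e] at hsplit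
    rw [hsumX] at hsplit
    simp only [hcast, Nat.cast_zero]
    linarith [hsplit]
  -- assemble
  have h1 : ∑ k ∈ Ico 1 n, (X k - X (k-1)) * (if k ≤ (i:ℕ) then (1:ℝ) else 0)
      = X i.val - X 0 := by
    have hite : ∀ k, (X k - X (k-1)) * (if k ≤ (i:ℕ) then (1:ℝ) else 0)
        = if k ≤ (i:ℕ) then (X k - X (k-1)) else 0 := by
      intro k; split <;> simp
    simp only [hite]
    rw [← Finset.sum_filter]
    have hf : filter (fun k => k ≤ (i:ℕ)) (Ico 1 n) = Ico 1 ((i:ℕ)+1) := by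
      ext m; simp only [mem_filter, mem_Ico]
      have := i.isLt; omega
    rw [hf]; exact tel1
  have h2 : ∑ k ∈ Ico 1 n, (X k - X (k-1)) * (((n:ℝ)-(k:ℕ))/n) = - X 0 := by
    have hd : ∀ k, (X k - X (k-1)) * (((n:ℝ)-(k:ℕ))/n)
        = ((X k - X (k-1)) * ((n:ℝ)-(k:ℕ)))/n := fun k => by ring
    simp only [hd]
    rw [← Finset.sum_div, tel2]
    field_simp
  have hsplit2 : ∀ k, (X k - X (k-1)) * ((if k ≤ (i:ℕ) then (1:ℝ) else 0) - ((n:ℝ)-(k:ℕ))/n)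
      = (X k - X (k-1)) * (if k ≤ (i:ℕ) then (1:ℝ) else 0)
        - (X k - X (k-1)) * (((n:ℝ)-(k:ℕ))/n) := fun k => by ring
  show x i = ∑ k ∈ Ico 1 n, (X k - X (k-1)) *
    ((if k ≤ (i:ℕ) then (1:ℝ) else 0) - ((n:ℝ) - k)/n)
  simp only [hsplit2]
  rw [Finset.sum_sub_distrib, h1, h2, hXv i]
  ring

lemma vec_decomp (n : ℕ) (hn : 2 ≤ n) (x : Fin n → ℝ)
    (hx0 : ∑ i, x i = 0) :
    (show EuclideanSpace ℝ (Fin n) from WithLp.toLp 2 x)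
      = ∑ k ∈ Ico 1 n, (Xext n x k - Xext n x (k-1)) • wv n k := by
  ext i
  show x i = _
  rw [scalar_decomp n hn x hx0 i, WithLp.ofLp_sum, Finset.sum_apply]
  rfl

lemma key (n : ℕ) (hn : 2 ≤ n) (x y : Fin n → ℝ) (hx : Monotone x) (hy : Monotone y)
    (hx0 : ∑ i, x i = 0) (hy0 : ∑ i, y i = 0) :
    ∑ i, x i * y i
      ≥ (1/((n:ℝ)-1)) * Real.sqrt (∑ i, x i ^ 2) * Real.sqrt (∑ i, y i ^ 2) := by
  set X : EuclideanSpace ℝ (Fin n) := (show EuclideanSpace ℝ (Fin n) from WithLp.toLp 2 x) with hXdef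
  set Y : EuclideanSpace ℝ (Fin n) := (show EuclideanSpace ℝ (Fin n) from WithLp.toLp 2 y) with hYdef
  set d : ℕ → ℝ := fun k => Xext n x k - Xext n x (k-1) with hd
  set e : ℕ → ℝ := fun k => Xext n y k - Xext n y (k-1) with he
  have hXd : X = ∑ k ∈ Ico 1 n, d k • wv n k := vec_decomp n hn x hx0
  have hYd : Y = ∑ k ∈ Ico 1 n, e k • wv n k := vec_decomp n hn y hy0
  have hdpos : ∀ k ∈ Ico 1 n, 0 ≤ d k := by
    intro k hk
    rw [mem_Ico] at hk
    have h1 : k < n := hk.2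
    have h2 : k - 1 < n := by omega
    simp only [hd, Xext, dif_pos h1, dif_pos h2, sub_nonneg]
    exact hx (Fin.mk_le_mk.mpr (by omega))
  have hepos : ∀ k ∈ Ico 1 n, 0 ≤ e k := by
    intro k hk
    rw [mem_Ico] at hk
    have h1 : k < n := hk.2
    have h2 : k - 1 < n := by omega
    simp only [he, Xext, dif_pos h1, dif_pos h2, sub_nonneg]
    exact hy (Fin.mk_le_mk.mpr (by omega))
  have hinner : (inner ℝ X Y : ℝ) = ∑ i, x i * y i := by
    simp [PiLp.inner_apply, RCLike.inner_apply, conj_trivial, hXdef, hYdef, mul_comm]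
  have hnormX : ‖X‖ = Real.sqrt (∑ i, x i ^ 2) := by
    rw [EuclideanSpace.norm_eq]
    congr 1
    exact Finset.sum_congr rfl fun i _ => by rw [Real.norm_eq_abs, sq_abs]
  have hnormY : ‖Y‖ = Real.sqrt (∑ i, y i ^ 2) := by
    rw [EuclideanSpace.norm_eq]
    congr 1
    exact Finset.sum_congr rfl fun i _ => by rw [Real.norm_eq_abs, sq_abs]
  -- triangle inequality bounds
  have htriX : ‖X‖ ≤ ∑ k ∈ Ico 1 n, d k * ‖wv n k‖ := by
    rw [hXd]
    refine (norm_sum_le _ _).trans_eq ?_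
    refine Finset.sum_congr rfl fun k hk => ?_
    rw [norm_smul, Real.norm_eq_abs, abs_of_nonneg (hdpos k hk)]
  have htriY : ‖Y‖ ≤ ∑ k ∈ Ico 1 n, e k * ‖wv n k‖ := by
    rw [hYd]
    refine (norm_sum_le _ _).trans_eq ?_
    refine Finset.sum_congr rfl fun k hk => ?_
    rw [norm_smul, Real.norm_eq_abs, abs_of_nonneg (hepos k hk)]
  -- expand inner product
  have hexp : (inner ℝ X Y : ℝ)
      = ∑ j ∈ Ico 1 n, ∑ k ∈ Ico 1 n, d j * e k * (inner ℝ (wv n j) (wv n k) : ℝ) := by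
    rw [hXd, hYd, sum_inner]
    refine Finset.sum_congr rfl fun j _ => ?_
    rw [inner_sum]
    refine Finset.sum_congr rfl fun k _ => ?_
    rw [real_inner_smul_left, real_inner_smul_right]
    ring
  -- lower bound term by term
  have hbound : (inner ℝ X Y : ℝ)
      ≥ (1/((n:ℝ)-1)) * (∑ k ∈ Ico 1 n, d k * ‖wv n k‖) * (∑ k ∈ Ico 1 n, e k * ‖wv n k‖) := by
    rw [hexp]
    have rhs_eq : (1/((n:ℝ)-1)) * (∑ k ∈ Ico 1 n, d k * ‖wv n k‖) * (∑ k ∈ Ico 1 n, e k * ‖wv n k‖)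
        = ∑ j ∈ Ico 1 n, ∑ k ∈ Ico 1 n,
            d j * e k * ((1/((n:ℝ)-1)) * ‖wv n j‖ * ‖wv n k‖) := by
      rw [mul_assoc, Finset.sum_mul_sum, Finset.mul_sum]
      refine Finset.sum_congr rfl fun j _ => ?_
      rw [Finset.mul_sum]
      refine Finset.sum_congr rfl fun k _ => ?_
      ring
    rw [rhs_eq]
    refine Finset.sum_le_sum fun j hj => Finset.sum_le_sum fun k hk => ?_
    rw [mem_Ico] at hj hk
    have := gen_bound n j k hn hj.1 hk.1 (by omega) (by omega)
    exact mul_le_mul_of_nonneg_left this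
      (mul_nonneg (hdpos j (by rw [mem_Ico]; exact hj)) (hepos k (by rw [mem_Ico]; exact hk)))
  -- combine
  rw [← hinner, ← hnormX, ← hnormY]
  have hc : (0:ℝ) ≤ 1/((n:ℝ)-1) := by
    have h2 : (2:ℝ) ≤ n := by exact_mod_cast hn
    have h3 : (0:ℝ) < (n:ℝ)-1 := by linarith
    positivity
  refine le_trans ?_ hbound
  have h1 : (1/((n:ℝ)-1)) * ‖X‖ * ‖Y‖ ≤ (1/((n:ℝ)-1)) * (∑ k ∈ Ico 1 n, d k * ‖wv n k‖) * ‖Y‖ := by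
    apply mul_le_mul_of_nonneg_right _ (norm_nonneg Y)
    exact mul_le_mul_of_nonneg_left htriX hc
  refine h1.trans ?_
  apply mul_le_mul_of_nonneg_left htriY
  exact mul_nonneg hc (le_trans (norm_nonneg X) htriX)

theorem benedetti_zero_sum (n : ℕ) (hn : 2 ≤ n) (a lam : Fin n → ℝ)
    (ha : Monotone a) (hlam : Monotone lam)
    (hane : ∃ i j, a i ≠ a j) (hsum : ∑ i, lam i = 0) :
    ∑ i, a i * lam i
      ≥ (1 / ((n : ℝ) - 1)) * Real.sqrt (∑ i, (a i - (∑ j, a j) / n) ^ 2) *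
          Real.sqrt (∑ i, (lam i) ^ 2)
    ∧ (1 / ((n : ℝ) - 1)) * Real.sqrt (∑ i, (a i - (∑ j, a j) / n) ^ 2) *
          Real.sqrt (∑ i, (lam i) ^ 2) ≥ 0 := by
  have hnR : (2:ℝ) ≤ (n:ℝ) := by exact_mod_cast hn
  have hn0 : (n:ℝ) ≠ 0 := by linarith
  set m : ℝ := (∑ j, a j) / n with hm
  set A : Fin n → ℝ := fun i => a i - m with hA
  have hA0 : ∑ i, A i = 0 := by
    simp only [hA, Finset.sum_sub_distrib, Finset.sum_const, Finset.card_univ,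
      Fintype.card_fin, nsmul_eq_mul, hm]
    field_simp
    ring
  have hAmono : Monotone A := fun i j hij => by
    simp only [hA]; exact sub_le_sub_right (ha hij) m
  have hAlam : ∑ i, A i * lam i = ∑ i, a i * lam i := by
    simp only [hA, sub_mul]
    rw [Finset.sum_sub_distrib, ← Finset.mul_sum, hsum, mul_zero, sub_zero]
  have hkey := key n hn A lam hAmono hlam hA0 hsum
  rw [hAlam] at hkey
  refine ⟨hkey, ?_⟩
  have hpos : (0:ℝ) < (n:ℝ) - 1 := by linarith
  have : (0:ℝ) ≤ 1 / ((n:ℝ) - 1) := by positivity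
  exact mul_nonneg (mul_nonneg this (Real.sqrt_nonneg _)) (Real.sqrt_nonneg _)
end

section
/- Let n ≥ 2, let a_1 ≤ ... ≤ a_n be real numbers not all equal, and let λ_1 ≤ ... ≤ λ_n be real numbers with ∑λ_i = 0. Then ∑_{i=1}^n a_i λ_i = 0 if and only if λ_i = 0 for all i. -/
theorem definiteness_linear (n : ℕ) (hn : 2 ≤ n) (a lam : Fin n → ℝ)
    (ha : Monotone a) (hlam : Monotone lam)
    (hane : ∃ i j, a i ≠ a j) (hsum : ∑ i, lam i = 0) :
    ∑ i, a i * lam i = 0 ↔ ∀ i, lam i = 0 := by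
  constructor
  · intro h0
    by_contra hne
    push_neg at hne
    obtain ⟨k, hk⟩ := hne
    -- there is a negative entry
    have hneg : ∃ i, lam i < 0 := by
      by_contra h
      push_neg at h
      have := (Finset.sum_eq_zero_iff_of_nonneg (fun i _ => h i)).mp hsum
      exact hk (this k (Finset.mem_univ k))
    -- there is a positive entry
    have hpos : ∃ i, 0 < lam i := by
      by_contra h
      push_neg at h
      have hsum' : ∑ i, -lam i = 0 := by simp [hsum]
      have := (Finset.sum_eq_zero_iff_of_nonneg
        (fun i _ => by linarith [h i])).mp hsum'
      exact hk (by linarith [this k (Finset.mem_univ k)])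
    haveI : Nonempty (Fin n) := ⟨⟨0, by omega⟩⟩
    set S : Finset (Fin n) := Finset.univ.filter (fun i => lam i < 0) with hS
    have hSne : S.Nonempty := by
      obtain ⟨i, hi⟩ := hneg
      exact ⟨i, by simp [hS, hi]⟩
    set m : Fin n := S.max' hSne with hm
    have hmneg : lam m < 0 := by
      have := S.max'_mem hSne
      simpa [hS] using this
    have hmax : ∀ i, lam i < 0 → i ≤ m := fun i hi =>
      S.le_max' i (by simp [hS, hi])
    have hnonneg : ∀ i ∈ Finset.univ, 0 ≤ (a i - a m) * lam i := by
      intro i _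
      rcases le_or_gt i m with h | h
      · have h1 : a i ≤ a m := ha h
        have h2 : lam i ≤ lam m := hlam h
        nlinarith
      · have h2 : 0 ≤ lam i := by
          by_contra hc
          push_neg at hc
          exact absurd (hmax i hc) (not_le.mpr h)
        have h1 : a m ≤ a i := ha h.le
        nlinarith
    have hsum2 : ∑ i, (a i - a m) * lam i = 0 := by
      have : ∑ i, (a i - a m) * lam i = ∑ i, a i * lam i - a m * ∑ i, lam i := by
        rw [Finset.mul_sum, ← Finset.sum_sub_distrib]
        congr 1; ext i; ring
      rw [this, h0, hsum]; ring
    have hzero := (Finset.sum_eq_zero_iff_of_nonneg hnonneg).mp hsum2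
    set z : Fin n := ⟨0, by omega⟩ with hz
    set t : Fin n := ⟨n - 1, by omega⟩ with ht
    have hzm : z ≤ m := by
      simp [hz, Fin.le_def]
    have hlamz : lam z < 0 := lt_of_le_of_lt (hlam hzm) hmneg
    have hlamt : 0 < lam t := by
      obtain ⟨i, hi⟩ := hpos
      exact lt_of_lt_of_le hi (hlam (by simp [ht, Fin.le_def]; omega))
    have haz : a z = a m := by
      have := hzero z (Finset.mem_univ z)
      rcases mul_eq_zero.mp this with h | h
      · linarith [sub_eq_zero.mp h]
      · exact absurd h (ne_of_lt hlamz)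
    have hat : a t = a m := by
      have := hzero t (Finset.mem_univ t)
      rcases mul_eq_zero.mp this with h | h
      · linarith [sub_eq_zero.mp h]
      · exact absurd h (ne_of_gt hlamt)
    have hconst : ∀ i, a i = a z := by
      intro i
      have h1 : a z ≤ a i := ha (by simp [hz, Fin.le_def])
      have h2 : a i ≤ a t := ha (by simp [ht, Fin.le_def]; omega)
      have : a z = a t := by rw [haz, hat]
      linarith
    obtain ⟨i, j, hij⟩ := hane
    exact hij ((hconst i).trans (hconst j).symm)
  · intro h
    simp [h]
end

section
/- Let n ≥ 2 and let x_1 ≤ ... ≤ x_n be real numbers, not all equal, with mean x̄ and sample standard deviation s = sqrt((1/(n-1))∑(x_i - x̄)²). Then Gini's mean difference G = (1/(n(n-1)))∑_i∑_j|x_i - x_j| satisfies 2√2/(n(n-1)) · s ≤ G ≤ √(2(n-1)) · s. -/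
open Finset

theorem gini_bounds (n : ℕ) (hn : 2 ≤ n) (x : Fin n → ℝ)
    (hmono : Monotone x) (hne : ∃ i j, x i ≠ x j) :
    (2 * Real.sqrt 2 / ((n : ℝ) * ((n : ℝ) - 1))) *
        Real.sqrt ((1 / ((n : ℝ) - 1)) * ∑ i, (x i - (∑ j, x j) / n) ^ 2)
      ≤ (1 / ((n : ℝ) * ((n : ℝ) - 1))) * ∑ i, ∑ j, |x i - x j|
    ∧ (1 / ((n : ℝ) * ((n : ℝ) - 1))) * ∑ i, ∑ j, |x i - x j|
      ≤ Real.sqrt (2 * ((n : ℝ) - 1)) *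
          Real.sqrt ((1 / ((n : ℝ) - 1)) * ∑ i, (x i - (∑ j, x j) / n) ^ 2) := by
  have hn2 : (2:ℝ) ≤ (n:ℝ) := by exact_mod_cast hn
  have hn1 : (0:ℝ) < (n:ℝ) - 1 := by linarith
  have hnpos : (0:ℝ) < (n:ℝ) := by linarith
  have hN : (0:ℝ) < (n:ℝ) * ((n:ℝ) - 1) := mul_pos hnpos hn1
  set m : ℝ := (∑ j, x j) / (n:ℝ) with hm
  set V : ℝ := ∑ i, (x i - m) ^ 2 with hVdef
  set S : ℝ := ∑ i, ∑ j, |x i - x j| with hSdef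
  have hVnn : 0 ≤ V := Finset.sum_nonneg fun i _ => sq_nonneg _
  have hSnn : 0 ≤ S := Finset.sum_nonneg fun i _ =>
    Finset.sum_nonneg fun j _ => abs_nonneg _
  have ha0 : ∑ i, (x i - m) = 0 := by
    rw [Finset.sum_sub_distrib, Finset.sum_const, Finset.card_univ,
      Fintype.card_fin, hm, nsmul_eq_mul]
    field_simp
    ring
  set i0 : Fin n := ⟨0, by omega⟩ with hi0
  set iN : Fin n := ⟨n - 1, by omega⟩ with hiN
  have hne01 : i0 ≠ iN := by
    simp only [hi0, hiN, ne_eq, Fin.mk.injEq]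
    omega
  set d : ℝ := x iN - x i0 with hd_def
  have hile : ∀ i : Fin n, i ≤ iN := by
    intro i
    have hi := i.isLt
    rw [hiN, Fin.le_def]
    simp only [Fin.val_mk]
    omega
  have h0le : ∀ i : Fin n, i0 ≤ i := by
    intro i
    rw [hi0, Fin.le_def]
    simp
  have hd : 0 ≤ d := sub_nonneg.2 (hmono (h0le iN))
  have habs : ∀ i j : Fin n, |x i - x j| ≤ d := by
    intro i j
    have h1 : x i ≤ x iN := hmono (hile i)
    have h2 : x i0 ≤ x i := hmono (h0le i)
    have h3 : x j ≤ x iN := hmono (hile j)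
    have h4 : x i0 ≤ x j := hmono (h0le j)
    rw [abs_le]
    constructor <;> [linarith; linarith]
  -- sum of squared differences identity
  have hsq : ∑ i, ∑ j, (x i - x j) ^ 2 = 2 * (n:ℝ) * V := by
    have expand : ∀ i j : Fin n,
        (x i - x j) ^ 2 = (x i - m) ^ 2 + (x j - m) ^ 2 - 2 * ((x i - m) * (x j - m)) := by
      intro i j; ring
    calc ∑ i, ∑ j, (x i - x j) ^ 2
        = ∑ i : Fin n, ((n:ℝ) * (x i - m) ^ 2 + V - 2 * ((x i - m) * ∑ j, (x j - m))) := by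
          refine Finset.sum_congr rfl fun i _ => ?_
          simp_rw [expand i]
          rw [Finset.sum_sub_distrib, Finset.sum_add_distrib, Finset.sum_const,
            Finset.card_univ, Fintype.card_fin, ← Finset.mul_sum, ← Finset.mul_sum, nsmul_eq_mul, hVdef]
      _ = 2 * (n:ℝ) * V := by
          simp only [ha0, mul_zero, sub_zero]
          rw [Finset.sum_add_distrib, ← Finset.mul_sum, Finset.sum_const,
            Finset.card_univ, Fintype.card_fin, nsmul_eq_mul, ← hVdef]
          ring
  -- 2nV ≤ d S
  have h2nV : 2 * (n:ℝ) * V ≤ d * S := by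
    rw [← hsq, hSdef]
    have : ∀ i : Fin n, ∑ j, (x i - x j) ^ 2 ≤ ∑ j, d * |x i - x j| := by
      intro i
      refine Finset.sum_le_sum fun j _ => ?_
      have h := habs i j
      have h2 : (x i - x j) ^ 2 = |x i - x j| ^ 2 := (sq_abs _).symm
      nlinarith [abs_nonneg (x i - x j)]
    calc ∑ i, ∑ j, (x i - x j) ^ 2 ≤ ∑ i : Fin n, ∑ j, d * |x i - x j| :=
          Finset.sum_le_sum fun i _ => this i
      _ = d * ∑ i : Fin n, ∑ j, |x i - x j| := by
          simp_rw [← Finset.mul_sum]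
  -- 2d ≤ S
  have hS2d : 2 * d ≤ S := by
    have hf0 : |x i0 - x iN| ≤ ∑ j, |x i0 - x j| :=
      Finset.single_le_sum (f := fun j => |x i0 - x j|)
        (fun j _ => abs_nonneg _) (Finset.mem_univ iN)
    have hfN : |x iN - x i0| ≤ ∑ j, |x iN - x j| :=
      Finset.single_le_sum (f := fun j => |x iN - x j|)
        (fun j _ => abs_nonneg _) (Finset.mem_univ i0)
    have hpair : (∑ j, |x i0 - x j|) + (∑ j, |x iN - x j|) ≤ S := by
      calc (∑ j, |x i0 - x j|) + (∑ j, |x iN - x j|)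
          = ∑ i ∈ ({i0, iN} : Finset (Fin n)), ∑ j, |x i - x j| :=
            (Finset.sum_pair (f := fun i => ∑ j, |x i - x j|) hne01).symm
        _ ≤ S := Finset.sum_le_sum_of_subset_of_nonneg (Finset.subset_univ _)
            (fun i _ _ => Finset.sum_nonneg fun j _ => abs_nonneg _)
    have e1 : |x i0 - x iN| = d := by rw [abs_sub_comm, abs_of_nonneg hd]
    have e2 : |x iN - x i0| = d := abs_of_nonneg hd
    linarith
  -- d² ≤ 2V
  have hd2V : d ^ 2 ≤ 2 * V := by
    have hpair : (x i0 - m) ^ 2 + (x iN - m) ^ 2 ≤ V := by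
      calc (x i0 - m) ^ 2 + (x iN - m) ^ 2
          = ∑ i ∈ ({i0, iN} : Finset (Fin n)), (x i - m) ^ 2 :=
            (Finset.sum_pair (f := fun i => (x i - m) ^ 2) hne01).symm
        _ ≤ V := Finset.sum_le_sum_of_subset_of_nonneg (Finset.subset_univ _)
            (fun i _ _ => sq_nonneg _)
    nlinarith [sq_nonneg ((x iN - m) + (x i0 - m))]
  have hdle : d ≤ Real.sqrt (2 * V) := by
    rw [show d = Real.sqrt (d ^ 2) from (Real.sqrt_sq hd).symm]
    exact Real.sqrt_le_sqrt hd2V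
  -- S ≤ n(n-1)d
  have hSup : S ≤ (n:ℝ) * (((n:ℝ) - 1) * d) := by
    have hfi : ∀ i : Fin n, ∑ j, |x i - x j| ≤ ((n:ℝ) - 1) * d := by
      intro i
      have h0 : |x i - x i| = 0 := by simp
      have herase : ∑ j, |x i - x j| = ∑ j ∈ Finset.univ.erase i, |x i - x j| :=
        (Finset.sum_erase (a := i) Finset.univ h0).symm
      rw [herase]
      calc ∑ j ∈ Finset.univ.erase i, |x i - x j|
          ≤ (Finset.univ.erase i).card • d :=
            Finset.sum_le_card_nsmul _ _ d (fun j _ => habs i j)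
        _ = ((n:ℝ) - 1) * d := by
            rw [Finset.card_erase_of_mem (Finset.mem_univ i), Finset.card_univ,
              Fintype.card_fin, nsmul_eq_mul, Nat.cast_sub (by omega : 1 ≤ n),
              Nat.cast_one]
    calc S ≤ ∑ _i : Fin n, ((n:ℝ) - 1) * d := Finset.sum_le_sum fun i _ => hfi i
      _ = (n:ℝ) * (((n:ℝ) - 1) * d) := by
          rw [Finset.sum_const, Finset.card_univ, Fintype.card_fin, nsmul_eq_mul]
  constructor
  · -- lower bound
    have key : 8 * V ≤ ((n:ℝ) - 1) * S ^ 2 := by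
      nlinarith [mul_le_mul_of_nonneg_right hS2d hSnn, h2nV, sq_nonneg S, hVnn, hd,
        mul_nonneg (mul_nonneg (sub_nonneg.2 hn2) (by linarith : (0:ℝ) ≤ (n:ℝ)+1)) (sq_nonneg S)]
    have key2 : 2 * Real.sqrt 2 * Real.sqrt ((1 / ((n:ℝ) - 1)) * V) ≤ S := by
      have h8 : (2:ℝ) * Real.sqrt 2 = Real.sqrt 8 := by
        rw [show (8:ℝ) = 2 ^ 2 * 2 by norm_num, Real.sqrt_mul (by positivity),
          Real.sqrt_sq (by norm_num : (0:ℝ) ≤ 2)]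
      rw [h8, ← Real.sqrt_mul (by norm_num : (0:ℝ) ≤ 8)]
      have harg : (8:ℝ) * ((1 / ((n:ℝ) - 1)) * V) ≤ S ^ 2 := by
        rw [show (8:ℝ) * ((1 / ((n:ℝ) - 1)) * V) = 8 * V / ((n:ℝ) - 1) by ring,
          div_le_iff₀ hn1]
        linarith
      calc Real.sqrt (8 * ((1 / ((n:ℝ) - 1)) * V)) ≤ Real.sqrt (S ^ 2) :=
            Real.sqrt_le_sqrt harg
        _ = S := Real.sqrt_sq hSnn
    calc 2 * Real.sqrt 2 / ((n:ℝ) * ((n:ℝ) - 1)) * Real.sqrt ((1 / ((n:ℝ) - 1)) * V)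
        = (2 * Real.sqrt 2 * Real.sqrt ((1 / ((n:ℝ) - 1)) * V)) / ((n:ℝ) * ((n:ℝ) - 1)) := by
          ring
      _ ≤ S / ((n:ℝ) * ((n:ℝ) - 1)) := by gcongr
      _ = 1 / ((n:ℝ) * ((n:ℝ) - 1)) * S := by ring
  · -- upper bound
    have hcomb : Real.sqrt (2 * ((n:ℝ) - 1)) * Real.sqrt ((1 / ((n:ℝ) - 1)) * V)
        = Real.sqrt (2 * V) := by
      rw [← Real.sqrt_mul (by positivity)]
      congr 1
      field_simp
    rw [hcomb]
    have h1 : S ≤ (n:ℝ) * (((n:ℝ) - 1) * Real.sqrt (2 * V)) := by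
      calc S ≤ (n:ℝ) * (((n:ℝ) - 1) * d) := hSup
        _ ≤ (n:ℝ) * (((n:ℝ) - 1) * Real.sqrt (2 * V)) := by
            have := mul_le_mul_of_nonneg_left hdle (le_of_lt hn1)
            nlinarith
    calc 1 / ((n:ℝ) * ((n:ℝ) - 1)) * S
        ≤ 1 / ((n:ℝ) * ((n:ℝ) - 1)) * ((n:ℝ) * (((n:ℝ) - 1) * Real.sqrt (2 * V))) := by
          have hpos : 0 ≤ 1 / ((n:ℝ) * ((n:ℝ) - 1)) := by positivity
          exact mul_le_mul_of_nonneg_left h1 hpos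
      _ = Real.sqrt (2 * V) := by
          field_simp
end
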